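/- Suppose for all states x and actions a, |Q(x,a) − Q̂(x,a)| ≤ e_Q, ∑_a |r(x,a) − r̂(x,a)| ≤ e_R, and ∑_{x'} |T(x'|x,a) − T̂(x'|x,a)| ≤ e_T, with rewards in [0,1] and discount γ ∈ [0,1). For any rollout policy π_r, any start state x, and rollout depth H ≥ 1, the model-based estimated return ξ_p(π_r, x) = E_{π_r, T̂, r̂}[∑_{h=0}^{H−1} γ^h r̂_h + γ^H max_a Q̂(x_H, a) | x] and the true-model quantity ξ(π_r, x) = E_{π_r, T, r}[∑_{h=0}^{H−1} γ^h r_h + γ^H max_a Q(x_H, a) | x] satisfy |ξ_p(π_r, x) − ξ(π_r, x)| ≤ (1 − γ^H + H γ^H (1−γ))/(1−γ)^2 · e_T + (1 − γ^H)/(1−γ) · e_R + γ^H · e_Q. -/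

import Mathlib

/-- Expected `H`-step bootstrapped return from `x0` under stochastic policy `π`,
transition kernel `T`, mean reward `r`, with `max_a Q` evaluated at the final state. -/
noncomputable def gatsReturn {X A : Type*} [Fintype X] [Fintype A] [Nonempty A]
    (T : X → A → X → ℝ) (r : X → A → ℝ) (Q : X → A → ℝ) (π : X → A → ℝ)
    (γ : ℝ) (H : ℕ) (x0 : X) : ℝ :=
  ∑ traj : (Fin H → A) × (Fin H → X),
    (∏ j : Fin H,
        π (if h : (j : ℕ) = 0 then x0
            else traj.2 ⟨(j : ℕ) - 1, lt_of_le_of_lt (Nat.sub_le _ _) j.isLt⟩) (traj.1 j) *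
          T (if h : (j : ℕ) = 0 then x0
              else traj.2 ⟨(j : ℕ) - 1, lt_of_le_of_lt (Nat.sub_le _ _) j.isLt⟩) (traj.1 j)
            (traj.2 j)) *
      ((∑ j : Fin H,
          γ ^ (j : ℕ) *
            r (if h : (j : ℕ) = 0 then x0
                else traj.2 ⟨(j : ℕ) - 1, lt_of_le_of_lt (Nat.sub_le _ _) j.isLt⟩)
              (traj.1 j)) +
        γ ^ H *
          Finset.univ.sup' Finset.univ_nonempty
            (Q (if h : H = 0 then x0
                else traj.2 ⟨H - 1, Nat.sub_lt (Nat.pos_of_ne_zero h) one_pos⟩)))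

/-!
Both returns satisfy the finite-horizon Bellman recursion
`V₀ x = max_a Q x a`, `V_{n+1} x = ∑ₐ π(a|x) (r x a + γ ∑ₓ' T(x'|x,a) V_n x')`.
Subtracting the two recursions (simulation lemma) and using `|V_n| ≤ 1/(1-γ)` for the true model
gives `d_{n+1} ≤ e_R + γ (e_T/(1-γ) + d_n)` and `d₀ ≤ e_Q` for the uniform error `d_n`, so
`d_H ≤ (1-γ^H)/(1-γ) · (e_R + γ e_T/(1-γ)) + γ^H e_Q`, which is at most the stated bound since
`(1-γ^H) γ ≤ 1 - γ^H + H γ^H (1-γ)`.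
-/

open Finset

lemma Fin.cons_mk_eq_dite {α : Type*} {n : ℕ} (x0 : α) (xs : Fin n → α) (k : ℕ)
    (hk : k < n + 1) :
    (Fin.cons x0 xs : Fin (n + 1) → α) ⟨k, hk⟩ =
      if _ : k = 0 then x0 else xs ⟨k - 1, by omega⟩ := by
  cases k with
  | zero => rfl
  | succ k => exact Fin.cons_succ (α := fun _ => α) x0 xs ⟨k, by omega⟩

lemma Finset.sum_mul_add_mul_of_sum_eq_one {ι R : Type*} [CommSemiring R] {s : Finset ι}
    {p : ι → R} (hp : ∑ i ∈ s, p i = 1) (c γ : R) (f : ι → R) :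
    ∑ i ∈ s, p i * (c + γ * f i) = c + γ * ∑ i ∈ s, p i * f i := by
  simp only [mul_add, sum_add_distrib, ← sum_mul, hp, one_mul, mul_sum, mul_left_comm]

lemma Finset.abs_sum_mul_le {ι : Type*} (s : Finset ι) (w : ι → ℝ) {f : ι → ℝ} {c : ℝ}
    (hf : ∀ i ∈ s, |f i| ≤ c) : |∑ i ∈ s, w i * f i| ≤ (∑ i ∈ s, |w i|) * c :=
  calc |∑ i ∈ s, w i * f i| ≤ ∑ i ∈ s, |w i * f i| := abs_sum_le_sum_abs _ _
    _ ≤ ∑ i ∈ s, |w i| * c := sum_le_sum fun i hi => by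
        rw [abs_mul]; exact mul_le_mul_of_nonneg_left (hf i hi) (abs_nonneg _)
    _ = (∑ i ∈ s, |w i|) * c := (sum_mul _ _ _).symm

lemma Finset.sum_abs_eq_one {ι : Type*} {s : Finset ι} {p : ι → ℝ} (hp0 : ∀ i, 0 ≤ p i)
    (hp1 : ∑ i ∈ s, p i = 1) : ∑ i ∈ s, |p i| = 1 := by
  simp only [abs_of_nonneg (hp0 _), hp1]

lemma Finset.abs_sup'_sub_sup'_le {ι : Type*} {s : Finset ι} (hs : s.Nonempty) {f g : ι → ℝ}
    {e : ℝ} (hfg : ∀ i ∈ s, |f i - g i| ≤ e) : |s.sup' hs f - s.sup' hs g| ≤ e := by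
  rw [abs_sub_le_iff, sub_le_iff_le_add, sub_le_iff_le_add]
  constructor
  · refine sup'_le _ _ fun i hi => ?_
    linarith [le_sup' g hi, (abs_sub_le_iff.1 (hfg i hi)).1]
  · refine sup'_le _ _ fun i hi => ?_
    linarith [le_sup' f hi, (abs_sub_le_iff.1 (hfg i hi)).2]

namespace Rollout

variable {X A : Type*}

-- `traj = (as, xs)` records the action `a_j` of step `j` and the state `x_{j+1}` it leads to;
-- `stateBefore x0 xs j` is `x_j`.
def stateBefore {H : ℕ} (x0 : X) (xs : Fin H → X) (j : Fin H) : X :=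
  if _ : (j : ℕ) = 0 then x0 else xs ⟨(j : ℕ) - 1, lt_of_le_of_lt (Nat.sub_le _ _) j.isLt⟩

def finalState (H : ℕ) (x0 : X) (xs : Fin H → X) : X :=
  if h : H = 0 then x0 else xs ⟨H - 1, Nat.sub_lt (Nat.pos_of_ne_zero h) one_pos⟩

def weight (T : X → A → X → ℝ) (π : X → A → ℝ) {H : ℕ} (x0 : X)
    (traj : (Fin H → A) × (Fin H → X)) : ℝ :=
  ∏ j, π (stateBefore x0 traj.2 j) (traj.1 j) *
    T (stateBefore x0 traj.2 j) (traj.1 j) (traj.2 j)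

def discountedReturn [Fintype A] [Nonempty A] (r Q : X → A → ℝ) (γ : ℝ) {H : ℕ} (x0 : X)
    (traj : (Fin H → A) × (Fin H → X)) : ℝ :=
  (∑ j : Fin H, γ ^ (j : ℕ) * r (stateBefore x0 traj.2 j) (traj.1 j)) +
    γ ^ H * univ.sup' univ_nonempty (Q (finalState H x0 traj.2))

lemma stateBefore_eq_cons {H : ℕ} (x0 : X) (xs : Fin H → X) (j : Fin H) :
    stateBefore x0 xs j = (Fin.cons x0 xs : Fin (H + 1) → X) j.castSucc :=
  (Fin.cons_mk_eq_dite x0 xs j (by omega)).symm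

lemma finalState_eq_cons (H : ℕ) (x0 : X) (xs : Fin H → X) :
    finalState H x0 xs = (Fin.cons x0 xs : Fin (H + 1) → X) (Fin.last H) :=
  (Fin.cons_mk_eq_dite x0 xs H (by omega)).symm

@[simp]
lemma stateBefore_zero {n : ℕ} (x0 : X) (xs : Fin (n + 1) → X) : stateBefore x0 xs 0 = x0 :=
  rfl

@[simp]
lemma stateBefore_cons_succ {n : ℕ} (x0 x1 : X) (xs : Fin n → X) (j : Fin n) :
    stateBefore x0 (Fin.cons x1 xs) j.succ = stateBefore x1 xs j := by
  rw [stateBefore_eq_cons, stateBefore_eq_cons, ← Fin.succ_castSucc, Fin.cons_succ]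

lemma finalState_cons {n : ℕ} (x0 x1 : X) (xs : Fin n → X) :
    finalState (n + 1) x0 (Fin.cons x1 xs) = finalState n x1 xs := by
  rw [finalState_eq_cons, finalState_eq_cons, ← Fin.succ_last, Fin.cons_succ]

lemma weight_cons (T : X → A → X → ℝ) (π : X → A → ℝ) {n : ℕ} (x0 : X) (a : A) (x1 : X)
    (traj : (Fin n → A) × (Fin n → X)) :
    weight T π x0 (Fin.cons a traj.1, Fin.cons x1 traj.2) =
      π x0 a * T x0 a x1 * weight T π x1 traj := by
  simp [weight, Fin.prod_univ_succ]

lemma discountedReturn_cons [Fintype A] [Nonempty A] (r Q : X → A → ℝ) (γ : ℝ) {n : ℕ}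
    (x0 : X) (a : A) (x1 : X) (traj : (Fin n → A) × (Fin n → X)) :
    discountedReturn r Q γ x0 (Fin.cons a traj.1, Fin.cons x1 traj.2) =
      r x0 a + γ * discountedReturn r Q γ x1 traj := by
  simp only [discountedReturn, Fin.sum_univ_succ, finalState_cons, Fin.cons_zero, Fin.cons_succ,
    stateBefore_zero, stateBefore_cons_succ, Fin.val_zero, Fin.val_succ, pow_zero, pow_succ',
    one_mul, mul_assoc, mul_add, mul_sum, add_assoc]

lemma sum_trajectories_succ {M : Type*} [AddCommMonoid M] [Fintype X] [Fintype A] {n : ℕ}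
    (F : (Fin (n + 1) → A) × (Fin (n + 1) → X) → M) :
    ∑ traj, F traj = ∑ a, ∑ x1, ∑ traj : (Fin n → A) × (Fin n → X),
      F (Fin.cons a traj.1, Fin.cons x1 traj.2) := by
  rw [← Equiv.sum_comp ((Fin.consEquiv fun _ => A).prodCongr (Fin.consEquiv fun _ => X)) F]
  simp only [Fintype.sum_prod_type, Equiv.prodCongr_apply, Prod.map]
  exact sum_congr rfl fun a _ => sum_comm

lemma sum_weight [Fintype X] [Fintype A] (T : X → A → X → ℝ) (π : X → A → ℝ)
    (hT1 : ∀ x a, ∑ x', T x a x' = 1) (hπ1 : ∀ x, ∑ a, π x a = 1) (n : ℕ) (x0 : X) :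
    ∑ traj : (Fin n → A) × (Fin n → X), weight T π x0 traj = 1 := by
  induction n generalizing x0 with
  | zero => simp [weight]
  | succ n ih => simp [sum_trajectories_succ, weight_cons, ← mul_sum, ih, hT1, hπ1]

end Rollout

open Rollout

section ReturnRecursion

variable {X A : Type*} [Fintype X] [Fintype A] [Nonempty A]

lemma gatsReturn_eq_sum_weight_mul (T : X → A → X → ℝ) (r Q π : X → A → ℝ) (γ : ℝ) (H : ℕ)
    (x0 : X) :
    gatsReturn T r Q π γ H x0 =
      ∑ traj : (Fin H → A) × (Fin H → X), weight T π x0 traj * discountedReturn r Q γ x0 traj :=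
  rfl

lemma gatsReturn_zero (T : X → A → X → ℝ) (r Q π : X → A → ℝ) (γ : ℝ) (x0 : X) :
    gatsReturn T r Q π γ 0 x0 = univ.sup' univ_nonempty (Q x0) := by
  simp [gatsReturn_eq_sum_weight_mul, weight, discountedReturn, finalState]

lemma gatsReturn_succ (T : X → A → X → ℝ) (r Q π : X → A → ℝ) (γ : ℝ)
    (hT1 : ∀ x a, ∑ x', T x a x' = 1) (hπ1 : ∀ x, ∑ a, π x a = 1) (n : ℕ) (x0 : X) :
    gatsReturn T r Q π γ (n + 1) x0 =
      ∑ a, π x0 a * (r x0 a + γ * ∑ x', T x0 a x' * gatsReturn T r Q π γ n x') := by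
  simp only [gatsReturn_eq_sum_weight_mul, sum_trajectories_succ, weight_cons,
    discountedReturn_cons, mul_assoc, ← mul_sum]
  simp only [sum_mul_add_mul_of_sum_eq_one, sum_weight T π hT1 hπ1, hT1]

end ReturnRecursion

section Bounds

variable {X A : Type*} [Fintype X] [Fintype A] [Nonempty A]
  {T That : X → A → X → ℝ} {r rhat Q Qhat π : X → A → ℝ} {γ : ℝ}

lemma abs_gatsReturn_le (hγ0 : 0 ≤ γ) (hT0 : ∀ x a x', 0 ≤ T x a x')
    (hT1 : ∀ x a, ∑ x', T x a x' = 1) (hπ0 : ∀ x a, 0 ≤ π x a) (hπ1 : ∀ x, ∑ a, π x a = 1)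
    {R B : ℝ} (hRB : R + γ * B ≤ B) (hr : ∀ x a, |r x a| ≤ R) (hQ : ∀ x a, |Q x a| ≤ B)
    (n : ℕ) (x : X) : |gatsReturn T r Q π γ n x| ≤ B := by
  induction n generalizing x with
  | zero =>
    obtain ⟨a₀⟩ := ‹Nonempty A›
    rw [gatsReturn_zero, abs_le]
    exact ⟨(abs_le.1 (hQ x a₀)).1.trans (le_sup' _ (mem_univ a₀)),
      sup'_le _ _ fun a _ => (abs_le.1 (hQ x a)).2⟩
  | succ n ih =>
    have hstep : ∀ a ∈ univ, |r x a + γ * ∑ x', T x a x' * gatsReturn T r Q π γ n x'| ≤ B :=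
      fun a _ => calc
        _ ≤ |r x a| + |γ * ∑ x', T x a x' * gatsReturn T r Q π γ n x'| := abs_add_le _ _
        _ = |r x a| + γ * |∑ x', T x a x' * gatsReturn T r Q π γ n x'| := by
          rw [abs_mul, abs_of_nonneg hγ0]
        _ ≤ R + γ * ((∑ x', |T x a x'|) * B) := by
          gcongr
          · exact hr x a
          · exact abs_sum_mul_le _ _ fun x' _ => ih x'
        _ ≤ B := by rwa [sum_abs_eq_one (hT0 x a) (hT1 x a), one_mul]
    rw [gatsReturn_succ T r Q π γ hT1 hπ1]
    simpa [sum_abs_eq_one (hπ0 x) (hπ1 x)] using abs_sum_mul_le _ (π x) hstep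

lemma abs_gatsReturn_sub_succ_le (hγ0 : 0 ≤ γ) (hT1 : ∀ x a, ∑ x', T x a x' = 1)
    (hThat0 : ∀ x a x', 0 ≤ That x a x') (hThat1 : ∀ x a, ∑ x', That x a x' = 1)
    (hπ0 : ∀ x a, 0 ≤ π x a) (hπ1 : ∀ x, ∑ a, π x a = 1) {eT eR B δ : ℝ}
    (herrR : ∀ x, ∑ a, |r x a - rhat x a| ≤ eR)
    (herrT : ∀ x a, ∑ x', |T x a x' - That x a x'| ≤ eT) {n : ℕ}
    (hV : ∀ x, |gatsReturn T r Q π γ n x| ≤ B)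
    (hδ : ∀ x, |gatsReturn T r Q π γ n x - gatsReturn That rhat Qhat π γ n x| ≤ δ) (x : X) :
    |gatsReturn T r Q π γ (n + 1) x - gatsReturn That rhat Qhat π γ (n + 1) x| ≤
      eR + γ * (eT * B + δ) := by
  set V := gatsReturn T r Q π γ n
  set Vhat := gatsReturn That rhat Qhat π γ n
  have hB : 0 ≤ B := (abs_nonneg _).trans (hV x)
  have hπ_le_one : ∀ a ∈ univ, |π x a| ≤ 1 := fun a _ => by
    rw [abs_of_nonneg (hπ0 x a), ← hπ1 x]
    exact single_le_sum (fun b _ => hπ0 x b) (mem_univ a)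
  have hsplit : ∀ a,
      ∑ x', (T x a x' - That x a x') * V x' + ∑ x', That x a x' * (V x' - Vhat x') =
        ∑ x', T x a x' * V x' - ∑ x', That x a x' * Vhat x' := fun a => by
    rw [← sum_add_distrib, ← sum_sub_distrib]
    exact sum_congr rfl fun _ _ => by ring
  have hdecomp : gatsReturn T r Q π γ (n + 1) x - gatsReturn That rhat Qhat π γ (n + 1) x =
      ∑ a, (r x a - rhat x a) * π x a + γ * ∑ a, π x a *
        (∑ x', (T x a x' - That x a x') * V x' + ∑ x', That x a x' * (V x' - Vhat x')) := by
    rw [gatsReturn_succ T r Q π γ hT1 hπ1, gatsReturn_succ That rhat Qhat π γ hThat1 hπ1,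
      mul_sum, ← sum_add_distrib, ← sum_sub_distrib]
    exact sum_congr rfl fun a _ => by rw [hsplit]; ring
  have hinner : ∀ a ∈ univ,
      |∑ x', (T x a x' - That x a x') * V x' + ∑ x', That x a x' * (V x' - Vhat x')| ≤
        eT * B + δ := fun a _ => calc
    _ ≤ |∑ x', (T x a x' - That x a x') * V x'| + |∑ x', That x a x' * (V x' - Vhat x')| :=
        abs_add_le _ _
    _ ≤ (∑ x', |T x a x' - That x a x'|) * B + (∑ x', |That x a x'|) * δ :=
        add_le_add (abs_sum_mul_le _ _ fun x' _ => hV x') (abs_sum_mul_le _ _ fun x' _ => hδ x')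
    _ ≤ eT * B + δ := by
        rw [sum_abs_eq_one (hThat0 x a) (hThat1 x a), one_mul]
        gcongr
        exact herrT x a
  rw [hdecomp]
  calc _ ≤ |∑ a, (r x a - rhat x a) * π x a| + γ * |∑ a, π x a *
        (∑ x', (T x a x' - That x a x') * V x' + ∑ x', That x a x' * (V x' - Vhat x'))| :=
        (abs_add_le _ _).trans_eq (by rw [abs_mul, abs_of_nonneg hγ0])
    _ ≤ (∑ a, |r x a - rhat x a|) * 1 + γ * ((∑ a, |π x a|) * (eT * B + δ)) := by
        gcongr
        · exact abs_sum_mul_le _ _ hπ_le_one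
        · exact abs_sum_mul_le _ _ hinner
    _ ≤ eR + γ * (eT * B + δ) := by
        rw [sum_abs_eq_one (hπ0 x) (hπ1 x), mul_one, one_mul]
        gcongr
        exact herrR x

lemma abs_gatsReturn_sub_le (hγ0 : 0 ≤ γ) (hT1 : ∀ x a, ∑ x', T x a x' = 1)
    (hThat0 : ∀ x a x', 0 ≤ That x a x') (hThat1 : ∀ x a, ∑ x', That x a x' = 1)
    (hπ0 : ∀ x a, 0 ≤ π x a) (hπ1 : ∀ x, ∑ a, π x a = 1) {eT eR eQ B : ℝ}
    (herrQ : ∀ x a, |Q x a - Qhat x a| ≤ eQ) (herrR : ∀ x, ∑ a, |r x a - rhat x a| ≤ eR)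
    (herrT : ∀ x a, ∑ x', |T x a x' - That x a x'| ≤ eT)
    (hV : ∀ n x, |gatsReturn T r Q π γ n x| ≤ B) (n : ℕ) (x : X) :
    |gatsReturn T r Q π γ n x - gatsReturn That rhat Qhat π γ n x| ≤
      (∑ i ∈ range n, γ ^ i) * (eR + γ * (eT * B)) + γ ^ n * eQ := by
  induction n generalizing x with
  | zero => simpa [gatsReturn_zero] using abs_sup'_sub_sup'_le univ_nonempty fun a _ => herrQ x a
  | succ n ih =>
    refine (abs_gatsReturn_sub_succ_le hγ0 hT1 hThat0 hThat1 hπ0 hπ1 herrR herrT (hV n) ih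
      x).trans_eq ?_
    rw [geom_sum_succ, pow_succ]
    ring

end Bounds

theorem gats_model_based_model_free_tradeoff_general {X A : Type*}
    [Fintype X] [Fintype A] [Nonempty A]
    (γ : ℝ) (hγ0 : 0 ≤ γ) (hγ1 : γ < 1)
    (T That : X → A → X → ℝ) (r rhat : X → A → ℝ) (Q Qhat : X → A → ℝ)
    (eT eR eQ : ℝ) (heT : 0 ≤ eT)
    (hT0 : ∀ x a x', 0 ≤ T x a x') (hT1 : ∀ x a, ∑ x', T x a x' = 1)
    (hThat0 : ∀ x a x', 0 ≤ That x a x') (hThat1 : ∀ x a, ∑ x', That x a x' = 1)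
    (hr : ∀ x a, 0 ≤ r x a ∧ r x a ≤ 1)
    (hQ : ∀ x a, 0 ≤ Q x a ∧ Q x a ≤ 1 / (1 - γ))
    (herrQ : ∀ x a, |Q x a - Qhat x a| ≤ eQ)
    (herrR : ∀ x : X, ∑ a, |r x a - rhat x a| ≤ eR)
    (herrT : ∀ x a, ∑ x', |T x a x' - That x a x'| ≤ eT)
    (π : X → A → ℝ) (hπ0 : ∀ x a, 0 ≤ π x a) (hπ1 : ∀ x, ∑ a, π x a = 1)
    (H : ℕ) (x : X) :
    |gatsReturn That rhat Qhat π γ H x - gatsReturn T r Q π γ H x| ≤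
      (1 - γ ^ H + (H : ℝ) * γ ^ H * (1 - γ)) / (1 - γ) ^ 2 * eT +
        (1 - γ ^ H) / (1 - γ) * eR + γ ^ H * eQ := by
  have h1γ : 0 < 1 - γ := sub_pos.2 hγ1
  have hV : ∀ n x, |gatsReturn T r Q π γ n x| ≤ 1 / (1 - γ) :=
    abs_gatsReturn_le hγ0 hT0 hT1 hπ0 hπ1 (R := 1) (by field_simp; linarith)
      (fun x a => abs_le.2 ⟨by linarith [(hr x a).1], (hr x a).2⟩)
      (fun x a => abs_le.2 ⟨by linarith [(hQ x a).1, one_div_pos.2 h1γ], (hQ x a).2⟩)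
  have hgeom : ∑ i ∈ range H, γ ^ i = (1 - γ ^ H) / (1 - γ) :=
    eq_div_of_mul_eq h1γ.ne' (geom_sum_mul_neg γ H)
  have hcoef : (1 - γ ^ H) * γ ≤ 1 - γ ^ H + H * γ ^ H * (1 - γ) := by
    have hpow : γ ^ H ≤ 1 := pow_le_one₀ hγ0 hγ1.le
    nlinarith [mul_le_mul_of_nonneg_left hγ1.le (sub_nonneg.2 hpow),
      mul_nonneg (mul_nonneg (Nat.cast_nonneg H) (pow_nonneg hγ0 H)) h1γ.le]
  rw [abs_sub_comm]
  refine (abs_gatsReturn_sub_le hγ0 hT1 hThat0 hThat1 hπ0 hπ1 herrQ herrR herrT hV H x).trans ?_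
  calc (∑ i ∈ range H, γ ^ i) * (eR + γ * (eT * (1 / (1 - γ)))) + γ ^ H * eQ
      = (1 - γ ^ H) * γ / (1 - γ) ^ 2 * eT + (1 - γ ^ H) / (1 - γ) * eR + γ ^ H * eQ := by
        rw [hgeom]; field_simp; ring
    _ ≤ _ := by gcongr

theorem gats_model_based_model_free_tradeoff {X A : Type*}
    [Fintype X] [Fintype A] [Nonempty X] [Nonempty A]
    (γ : ℝ) (hγ0 : 0 ≤ γ) (hγ1 : γ < 1)
    (T That : X → A → X → ℝ) (r rhat : X → A → ℝ) (Q Qhat : X → A → ℝ)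
    (eT eR eQ : ℝ) (heT : 0 ≤ eT) (heR : 0 ≤ eR) (heQ : 0 ≤ eQ)
    (hT0 : ∀ x a x', 0 ≤ T x a x') (hT1 : ∀ x a, ∑ x', T x a x' = 1)
    (hThat0 : ∀ x a x', 0 ≤ That x a x') (hThat1 : ∀ x a, ∑ x', That x a x' = 1)
    (hr : ∀ x a, 0 ≤ r x a ∧ r x a ≤ 1)
    (hQ : ∀ x a, 0 ≤ Q x a ∧ Q x a ≤ 1 / (1 - γ))
    (herrQ : ∀ x a, |Q x a - Qhat x a| ≤ eQ)
    (herrR : ∀ x : X, ∑ a, |r x a - rhat x a| ≤ eR)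
    (herrT : ∀ x a, ∑ x', |T x a x' - That x a x'| ≤ eT)
    (π : X → A → ℝ) (hπ0 : ∀ x a, 0 ≤ π x a) (hπ1 : ∀ x, ∑ a, π x a = 1)
    (H : ℕ) (hH : 1 ≤ H) (x : X) :
    |gatsReturn That rhat Qhat π γ H x - gatsReturn T r Q π γ H x| ≤
      (1 - γ ^ H + (H : ℝ) * γ ^ H * (1 - γ)) / (1 - γ) ^ 2 * eT +
        (1 - γ ^ H) / (1 - γ) * eR + γ ^ H * eQ :=
  gats_model_based_model_free_tradeoff_general γ hγ0 hγ1 T That r rhat Q Qhat eT eR eQ heT hT0 hT1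
    hThat0 hThat1 hr hQ herrQ herrR herrT π hπ0 hπ1 H x
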